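/- With the same vertex-scaling setup, ∂α_i/∂u_i < 0: the angle at a vertex of a hyperbolic triangle strictly decreases as the conformal factor at that vertex increases. -/

import Mathlib

/-!
Write `a, b` for the lengths of the two edges at `vᵢ` and `c` for the opposite one, so that
`cos αᵢ = (cosh a cosh b - cosh c) / (sinh a sinh b)`. Raising `uᵢ` moves only `a` and `b`, with
`ȧ = 2 tanh (a/2)` and `ḃ = 2 tanh (b/2)`, and the chain rule gives
`d(cos αᵢ)/duᵢ = 2 / (sinh a sinh b) · g(cosh c)` with
`g(C) = (C cosh a - cosh b) / (1 + cosh a) + (C cosh b - cosh a) / (1 + cosh b)`.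
The function `g` is strictly increasing, and at the degenerate value `C = cosh (a - b)` it equals
`sinh (a - b) (tanh (a/2) - tanh (b/2)) ≥ 0`. The triangle inequality `|a - b| < c` therefore
makes `cos αᵢ` strictly increasing in `uᵢ`, i.e. `αᵢ` strictly decreasing.
-/

open Real

/-- Vertex-scaled edge length: `l` with `sinh(l/2) = sinh(d/2)·e^(ur+us)`. -/
noncomputable def vsLen (d ur us : ℝ) : ℝ :=
  2 * Real.arsinh (Real.sinh (d / 2) * Real.exp (ur + us))

def vsAdm (dij dik djk ui uj uk : ℝ) : Prop :=
  vsLen djk uj uk < vsLen dik ui uk + vsLen dij ui uj ∧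
  vsLen dik ui uk < vsLen djk uj uk + vsLen dij ui uj ∧
  vsLen dij ui uj < vsLen djk uj uk + vsLen dik ui uk

open Filter Topology

noncomputable def hypCosAngle (a b c : ℝ) : ℝ :=
  (cosh a * cosh b - cosh c) / (sinh a * sinh b)

lemma tanh_half_eq (x : ℝ) : tanh (x / 2) = sinh x / (1 + cosh x) := by
  have hc : cosh (x / 2) ≠ 0 := (cosh_pos _).ne'
  have hx : x = 2 * (x / 2) := by ring
  rw [hx, sinh_two_mul, cosh_two_mul, ← hx, tanh_eq_sinh_div_cosh]
  field_simp
  linear_combination (-sinh (x / 2)) * cosh_sq (x / 2)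

lemma hasDerivAt_vsLen (d u t : ℝ) :
    HasDerivAt (fun t => vsLen d t u) (2 * tanh (vsLen d t u / 2)) t := by
  have hy : HasDerivAt (fun t => sinh (d / 2) * exp (t + u)) (sinh (d / 2) * exp (t + u)) t := by
    simpa using ((hasDerivAt_id t).add_const u).exp.const_mul (sinh (d / 2))
  refine (hy.arsinh.const_mul 2).congr_deriv ?_
  rw [vsLen, mul_div_cancel_left₀ _ two_ne_zero, tanh_arsinh, smul_eq_mul]
  ring

lemma hasDerivAt_hypCosAngle {a b : ℝ → ℝ} {a' b' t : ℝ} (ha : HasDerivAt a a' t)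
    (hb : HasDerivAt b b' t) (c : ℝ) (hsa : sinh (a t) ≠ 0) (hsb : sinh (b t) ≠ 0) :
    HasDerivAt (fun t => hypCosAngle (a t) (b t) c)
      ((cosh (a t) * cosh c - cosh (b t)) / (sinh (a t) ^ 2 * sinh (b t)) * a' +
        (cosh (b t) * cosh c - cosh (a t)) / (sinh (a t) * sinh (b t) ^ 2) * b') t := by
  refine (((ha.cosh.mul hb.cosh).sub_const (cosh c)).div (ha.sinh.mul hb.sinh)
    (mul_ne_zero hsa hsb)).congr_deriv ?_
  simp only [Pi.mul_apply]
  field_simp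
  linear_combination (-(sinh (a t) * cosh (a t) * b')) * cosh_sq (b t)
    - sinh (b t) * cosh (b t) * a' * cosh_sq (a t)

lemma cosh_law_numerators_pos {a b c : ℝ} (h : |a - b| < c) :
    0 < (cosh a * cosh c - cosh b) / (1 + cosh a) + (cosh b * cosh c - cosh a) / (1 + cosh b) := by
  have hA : 0 < 1 + cosh a := by positivity
  have hB : 0 < 1 + cosh b := by positivity
  have hC : cosh (a - b) < cosh c := cosh_lt_cosh.2 (h.trans_le (le_abs_self c))
  have hAD : cosh a * cosh (a - b) - cosh b = sinh a * sinh (a - b) := by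
    have h := cosh_sub a (a - b)
    rw [sub_sub_cancel] at h
    linarith
  have hBD : cosh b * cosh (a - b) - cosh a = -(sinh b * sinh (a - b)) := by
    have h := cosh_add b (a - b)
    rw [add_sub_cancel] at h
    linarith
  have hdeg : 0 ≤ sinh (a - b) * (sinh a - sinh b + sinh (a - b)) := by
    rcases le_total a b with hab | hab
    · have h1 : sinh (a - b) ≤ 0 := sinh_nonpos_iff.2 (by linarith)
      have h2 : sinh a ≤ sinh b := sinh_le_sinh.2 hab
      nlinarith
    · have h1 : 0 ≤ sinh (a - b) := sinh_nonneg_iff.2 (by linarith)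
      have h2 : sinh b ≤ sinh a := sinh_le_sinh.2 hab
      nlinarith
  have hsplit :
      (cosh a * cosh c - cosh b) / (1 + cosh a) + (cosh b * cosh c - cosh a) / (1 + cosh b)
      = (cosh c - cosh (a - b)) * (cosh a / (1 + cosh a) + cosh b / (1 + cosh b))
        + sinh (a - b) * (sinh a - sinh b + sinh (a - b)) / ((1 + cosh a) * (1 + cosh b)) := by
    field_simp
    linear_combination (1 + cosh b) * hAD + (1 + cosh a) * hBD + (-sinh (a - b)) * sinh_sub a b
  rw [hsplit]
  exact add_pos_of_pos_of_nonneg (mul_pos (sub_pos.2 hC) (by positivity)) (by positivity)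

lemma hypCosAngle_scalingDeriv_pos {a b c : ℝ} (ha : 0 < a) (hb : 0 < b) (h : |a - b| < c) :
    0 < (cosh a * cosh c - cosh b) / (sinh a ^ 2 * sinh b) * (2 * tanh (a / 2)) +
      (cosh b * cosh c - cosh a) / (sinh a * sinh b ^ 2) * (2 * tanh (b / 2)) := by
  have hsa : 0 < sinh a := sinh_pos_iff.2 ha
  have hsb : 0 < sinh b := sinh_pos_iff.2 hb
  have hA : 0 < 1 + cosh a := by positivity
  have hB : 0 < 1 + cosh b := by positivity
  have hfactor : (cosh a * cosh c - cosh b) / (sinh a ^ 2 * sinh b) * (2 * tanh (a / 2)) +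
      (cosh b * cosh c - cosh a) / (sinh a * sinh b ^ 2) * (2 * tanh (b / 2)) =
      2 / (sinh a * sinh b) * ((cosh a * cosh c - cosh b) / (1 + cosh a) +
        (cosh b * cosh c - cosh a) / (1 + cosh b)) := by
    rw [tanh_half_eq, tanh_half_eq]
    field_simp
  rw [hfactor]
  exact mul_pos (by positivity) (cosh_law_numerators_pos h)

lemma isOpen_setOf_vsAdm (dij dik djk uj uk : ℝ) : IsOpen {t | vsAdm dij dik djk t uj uk} := by
  have hij : Continuous fun t => vsLen dij t uj :=
    continuous_iff_continuousAt.2 fun t => (hasDerivAt_vsLen dij uj t).continuousAt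
  have hik : Continuous fun t => vsLen dik t uk :=
    continuous_iff_continuousAt.2 fun t => (hasDerivAt_vsLen dik uk t).continuousAt
  exact (isOpen_lt continuous_const (hik.add hij)).inter
    ((isOpen_lt hik (continuous_const.add hij)).inter (isOpen_lt hij (continuous_const.add hik)))

theorem stmt5_general (dij dik djk : ℝ)
    (αi αj αk : ℝ → ℝ → ℝ → ℝ)
    (hang : ∀ ui uj uk, vsAdm dij dik djk ui uj uk →
      αi ui uj uk ∈ Set.Ioo 0 π ∧ αj ui uj uk ∈ Set.Ioo 0 π ∧ αk ui uj uk ∈ Set.Ioo 0 π ∧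
      Real.cos (αi ui uj uk) =
        (Real.cosh (vsLen dij ui uj) * Real.cosh (vsLen dik ui uk)
            - Real.cosh (vsLen djk uj uk)) /
          (Real.sinh (vsLen dij ui uj) * Real.sinh (vsLen dik ui uk)) ∧
      Real.cos (αj ui uj uk) =
        (Real.cosh (vsLen dij ui uj) * Real.cosh (vsLen djk uj uk)
            - Real.cosh (vsLen dik ui uk)) /
          (Real.sinh (vsLen dij ui uj) * Real.sinh (vsLen djk uj uk)) ∧
      Real.cos (αk ui uj uk) =
        (Real.cosh (vsLen dik ui uk) * Real.cosh (vsLen djk uj uk)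
            - Real.cosh (vsLen dij ui uj)) /
          (Real.sinh (vsLen dik ui uk) * Real.sinh (vsLen djk uj uk)))
    (ui uj uk : ℝ) (hadm : vsAdm dij dik djk ui uj uk) :
    deriv (fun t => αi t uj uk) ui < 0 := by
  have hαi : (fun t => αi t uj uk) =ᶠ[𝓝 ui]
      fun t => arccos (hypCosAngle (vsLen dij t uj) (vsLen dik t uk) (vsLen djk uj uk)) := by
    filter_upwards [(isOpen_setOf_vsAdm dij dik djk uj uk).mem_nhds hadm] with t ht
    obtain ⟨hmem, -, -, hcos, -, -⟩ := hang t uj uk ht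
    rw [hypCosAngle, ← hcos, arccos_cos hmem.1.le hmem.2.le]
  obtain ⟨⟨hpos, hlt⟩, -, -, hcos, -, -⟩ := hang ui uj uk hadm
  obtain ⟨hc, hb, ha⟩ := hadm
  have hcos_gt : -1 < cos (αi ui uj uk) := by
    simpa using cos_lt_cos_of_nonneg_of_le_pi hpos.le le_rfl hlt
  have hcos_lt : cos (αi ui uj uk) < 1 := by
    simpa using cos_lt_cos_of_nonneg_of_le_pi le_rfl hlt.le hpos
  rw [← hypCosAngle] at hcos
  rw [hcos] at hcos_gt hcos_lt
  have hF := hasDerivAt_hypCosAngle (hasDerivAt_vsLen dij uj ui) (hasDerivAt_vsLen dik uk ui)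
    (vsLen djk uj uk) (sinh_pos_iff.2 (by linarith)).ne' (sinh_pos_iff.2 (by linarith)).ne'
  have hα := (hasDerivAt_arccos hcos_gt.ne' hcos_lt.ne).comp (h₂ := arccos) ui hF
  refine (hαi.deriv_eq.trans hα.deriv).trans_lt ?_
  refine mul_neg_of_neg_of_pos ?_ (hypCosAngle_scalingDeriv_pos (by linarith) (by linarith)
    (abs_sub_lt_iff.2 ⟨by linarith, by linarith⟩))
  exact neg_neg_of_pos (one_div_pos.2 (sqrt_pos.2 (by nlinarith)))

/-- In the vertex-scaling setup, the partial derivative of the angle `αi`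
(opposite the edge `{jk}`) with respect to `uj` equals
`(1/cosh²(lij/2))·tan((αi+αj−αk)/2)`. -/
theorem stmt5 (dij dik djk : ℝ) (hdij : 0 < dij) (hdik : 0 < dik) (hdjk : 0 < djk)
    (αi αj αk : ℝ → ℝ → ℝ → ℝ)
    (hang : ∀ ui uj uk, vsAdm dij dik djk ui uj uk →
      αi ui uj uk ∈ Set.Ioo 0 π ∧ αj ui uj uk ∈ Set.Ioo 0 π ∧ αk ui uj uk ∈ Set.Ioo 0 π ∧
      Real.cos (αi ui uj uk) =
        (Real.cosh (vsLen dij ui uj) * Real.cosh (vsLen dik ui uk)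
            - Real.cosh (vsLen djk uj uk)) /
          (Real.sinh (vsLen dij ui uj) * Real.sinh (vsLen dik ui uk)) ∧
      Real.cos (αj ui uj uk) =
        (Real.cosh (vsLen dij ui uj) * Real.cosh (vsLen djk uj uk)
            - Real.cosh (vsLen dik ui uk)) /
          (Real.sinh (vsLen dij ui uj) * Real.sinh (vsLen djk uj uk)) ∧
      Real.cos (αk ui uj uk) =
        (Real.cosh (vsLen dik ui uk) * Real.cosh (vsLen djk uj uk)
            - Real.cosh (vsLen dij ui uj)) /
          (Real.sinh (vsLen dik ui uk) * Real.sinh (vsLen djk uj uk)))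
    (ui uj uk : ℝ) (hadm : vsAdm dij dik djk ui uj uk) :
    deriv (fun t => αi t uj uk) ui < 0 :=
  stmt5_general dij dik djk αi αj αk hang ui uj uk hadm
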